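/- arXiv:1011.1340 — 2 statements merged into one kernel-verified Lean document; each statement's English description precedes it below -/
import Mathlib

section
/- Let A₁, A₂, E, P be n×n positive semidefinite complex matrices with A₁ ≤ A₂ (i.e. A₂ − A₁ is positive semidefinite) and E ≤ P. Then for every real s with 0 < s < 1, Tr(A₂^s · E^(1−s)) − Tr(A₁^s · E^(1−s)) ≤ Tr(A₂^s · P^(1−s)) − Tr(A₁^s · P^(1−s)). -/
/-!
Löwner–Heinz: `t ↦ t ^ p` is operator monotone for `0 ≤ p ≤ 1`, so `A₂ ^ s - A₁ ^ s` and
`P ^ (1 - s) - E ^ (1 - s)` are positive semidefinite. The difference of the two sides of the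
inequality is the trace of their product, and the trace of a product of two positive
semidefinite matrices is nonnegative.
-/

open Matrix
open scoped ComplexOrder

/-- Real power `A ^ r` of a Hermitian matrix, defined via the functional calculus:
apply `t ↦ t ^ r` (real power, with `0 ^ 0 = 1`) to the eigenvalues in a spectral
decomposition. -/
noncomputable def hermPow {n : ℕ} {A : Matrix (Fin n) (Fin n) ℂ}
    (hA : A.IsHermitian) (r : ℝ) : Matrix (Fin n) (Fin n) ℂ :=
  hA.cfc (fun x : ℝ => x ^ r)

/-- The square root of a positive semidefinite matrix, with its definition from the older
Mathlib (removed since): `U * diagonal (√ ∘ eigenvalues) * U⋆`. -/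
noncomputable def Matrix.PosSemidef.sqrt {n 𝕜 : Type*} [Fintype n] [RCLike 𝕜] [DecidableEq n]
    {A : Matrix n n 𝕜} (hA : A.PosSemidef) : Matrix n n 𝕜 :=
  hA.1.eigenvectorUnitary.1 * diagonal ((↑) ∘ (√·) ∘ hA.1.eigenvalues) *
    (star hA.1.eigenvectorUnitary : Matrix n n 𝕜)

/-- The absolute value `|H|` of a Hermitian matrix: the positive semidefinite
square root of `H ^ 2`. -/
noncomputable def hermAbs {n : ℕ} {H : Matrix (Fin n) (Fin n) ℂ}
    (hH : H.IsHermitian) : Matrix (Fin n) (Fin n) ℂ :=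
  Matrix.PosSemidef.sqrt (A := H * H)
    (by simpa only [hH.eq] using Matrix.posSemidef_conjTranspose_mul_self H)

/-- The positive part `H₊ = (|H| + H) / 2` of a Hermitian matrix. -/
noncomputable def hermPosPart {n : ℕ} {H : Matrix (Fin n) (Fin n) ℂ}
    (hH : H.IsHermitian) : Matrix (Fin n) (Fin n) ℂ :=
  (2 : ℂ)⁻¹ • (hermAbs hH + H)

/-- The negative part `H₋ = (|H| - H) / 2` of a Hermitian matrix. -/
noncomputable def hermNegPart {n : ℕ} {H : Matrix (Fin n) (Fin n) ℂ}
    (hH : H.IsHermitian) : Matrix (Fin n) (Fin n) ℂ :=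
  (2 : ℂ)⁻¹ • (hermAbs hH - H)

open scoped MatrixOrder Matrix.Norms.L2Operator

lemma Matrix.PosSemidef.trace_mul_nonneg {𝕜 ι : Type*} [RCLike 𝕜] [Fintype ι] [DecidableEq ι]
    {A B : Matrix ι ι 𝕜} (hA : A.PosSemidef) (hB : B.PosSemidef) : 0 ≤ (A * B).trace := by
  have hS : (CFC.sqrt B)ᴴ = CFC.sqrt B := (CFC.sqrt_nonneg B).posSemidef.1
  calc 0 ≤ ((CFC.sqrt B)ᴴ * A * CFC.sqrt B).trace :=
        (hA.conjTranspose_mul_mul_same _).trace_nonneg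
    _ = (A * B).trace := by
      rw [hS, trace_mul_cycle, trace_mul_comm, CFC.sqrt_mul_sqrt_self B hB.nonneg]

lemma hermPow_eq_rpow {n : ℕ} {A : Matrix (Fin n) (Fin n) ℂ} (hA : A.PosSemidef) (r : ℝ) :
    hermPow hA.1 r = A ^ r := by
  rw [hermPow, ← hA.1.cfc_eq, CFC.rpow_eq_cfc_real hA.nonneg]

/-- Monotonicity lemma: for positive semidefinite `A₁ ≤ A₂` and `E ≤ P`, and `0 < s < 1`,
`Tr(A₂^s E^(1-s)) - Tr(A₁^s E^(1-s)) ≤ Tr(A₂^s P^(1-s)) - Tr(A₁^s P^(1-s))`. -/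
theorem trace_rpow_mul_rpow_sub_mono
    {n : ℕ} {A₁ A₂ E P : Matrix (Fin n) (Fin n) ℂ}
    (hA₁ : A₁.PosSemidef) (hA₂ : A₂.PosSemidef)
    (hE : E.PosSemidef) (hP : P.PosSemidef)
    (hA : (A₂ - A₁).PosSemidef) (hEP : (P - E).PosSemidef)
    (s : ℝ) (hs0 : 0 < s) (hs1 : s < 1) :
    (hermPow hA₂.1 s * hermPow hE.1 (1 - s)).trace
        - (hermPow hA₁.1 s * hermPow hE.1 (1 - s)).trace
      ≤ (hermPow hA₂.1 s * hermPow hP.1 (1 - s)).trace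
        - (hermPow hA₁.1 s * hermPow hP.1 (1 - s)).trace := by
  rw [hermPow_eq_rpow hA₁, hermPow_eq_rpow hA₂, hermPow_eq_rpow hE, hermPow_eq_rpow hP]
  have hA_pow : (A₂ ^ s - A₁ ^ s).PosSemidef :=
    le_iff.mp (CFC.rpow_le_rpow ⟨hs0.le, hs1.le⟩ (le_iff.mpr hA))
  have hP_pow : (P ^ (1 - s) - E ^ (1 - s)).PosSemidef :=
    le_iff.mp (CFC.rpow_le_rpow ⟨sub_nonneg.mpr hs1.le, sub_le_self 1 hs0.le⟩ (le_iff.mpr hEP))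
  have htrace := hA_pow.trace_mul_nonneg hP_pow
  rw [sub_mul, mul_sub, mul_sub, trace_sub, trace_sub, trace_sub] at htrace
  linear_combination htrace
end

section
/- For every real number t ≥ 0 and every real number s with 0 < s < 1, one has t^s = (sin(s·π)/π) · ∫₀^∞ λ^(s−1) · t/(t + λ) dλ, where the integral is taken over λ ∈ (0, ∞) with respect to Lebesgue measure (for t = 0 both sides are 0). -/
/-!
Substituting `λ = t x` reduces the integral to `t ^ s ∫₀^∞ x^(s-1) / (1 + x) dx`. The further
substitution `x = u / (1 - u)` turns this into the beta integral `B(s, 1 - s) = Γ(s) Γ(1 - s)`,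
which is `π / sin (π s)` by the reflection formula.
-/

open MeasureTheory Set Real ProbabilityTheory

lemma integral_Ioo_rpow_mul_one_sub_rpow_eq_beta {a b : ℝ} (ha : 0 < a) (hb : 0 < b) :
    ∫ x in Ioo (0 : ℝ) 1, x ^ (a - 1) * (1 - x) ^ (b - 1) = beta a b := by
  have hcomplex : Complex.betaIntegral a b
      = ((∫ x in Ioo (0 : ℝ) 1, x ^ (a - 1) * (1 - x) ^ (b - 1) : ℝ) : ℂ) := by
    rw [← integral_Ioc_eq_integral_Ioo, ← intervalIntegral.integral_of_le zero_le_one,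
      Complex.betaIntegral, ← intervalIntegral.integral_ofReal]
    refine intervalIntegral.integral_congr fun x hx => ?_
    rw [uIcc_of_le zero_le_one] at hx
    push_cast
    rw [Complex.ofReal_cpow hx.1, Complex.ofReal_cpow (sub_nonneg.2 hx.2)]
    push_cast
    rfl
  rw [beta_eq_betaIntegralReal a b ha hb, hcomplex, Complex.ofReal_re]

lemma beta_self_one_sub (s : ℝ) : beta s (1 - s) = π / sin (π * s) := by
  rw [beta, add_sub_cancel, Real.Gamma_one, div_one, Real.Gamma_mul_Gamma_one_sub]

lemma image_div_one_sub_Ioo : (fun u : ℝ => u / (1 - u)) '' Ioo 0 1 = Ioi 0 := by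
  ext y
  simp only [mem_image, mem_Ioo, mem_Ioi]
  constructor
  · rintro ⟨u, ⟨hu0, hu1⟩, rfl⟩
    exact div_pos hu0 (sub_pos.2 hu1)
  · intro hy
    refine ⟨y / (1 + y), ⟨by positivity, (div_lt_one (by positivity)).2 (by linarith)⟩, ?_⟩
    field_simp
    ring

lemma injOn_div_one_sub_Ioo : InjOn (fun u : ℝ => u / (1 - u)) (Ioo 0 1) := by
  intro a ha b hb hab
  have ha' : 1 - a ≠ 0 := (sub_pos.2 ha.2).ne'
  have hb' : 1 - b ≠ 0 := (sub_pos.2 hb.2).ne'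
  field_simp at hab
  linarith

lemma hasDerivAt_div_one_sub {u : ℝ} (hu : u ≠ 1) :
    HasDerivAt (fun u : ℝ => u / (1 - u)) (((1 - u) ^ 2)⁻¹) u := by
  refine ((hasDerivAt_id u).div ((hasDerivAt_id u).const_sub 1)
    (sub_ne_zero.2 hu.symm)).congr_deriv ?_
  simp only [id]
  ring

lemma integral_Ioi_rpow_mul_one_add_rpow_eq_beta {a b : ℝ} (ha : 0 < a) (hb : 0 < b) :
    ∫ x in Ioi (0 : ℝ), x ^ (a - 1) * (1 + x) ^ (-(a + b)) = beta a b := by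
  rw [← image_div_one_sub_Ioo, integral_image_eq_integral_abs_deriv_smul measurableSet_Ioo
      (fun u hu => (hasDerivAt_div_one_sub hu.2.ne).hasDerivWithinAt) injOn_div_one_sub_Ioo,
    ← integral_Ioo_rpow_mul_one_sub_rpow_eq_beta ha hb]
  refine setIntegral_congr_fun measurableSet_Ioo fun u ⟨hu0, hu1⟩ => ?_
  have hv : 0 < 1 - u := sub_pos.2 hu1
  have hone_add : 1 + u / (1 - u) = (1 - u)⁻¹ := by field_simp; ring
  rw [smul_eq_mul, abs_of_pos (by positivity), hone_add, inv_rpow hv.le, rpow_neg hv.le, inv_inv,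
    div_rpow hu0.le hv.le]
  have hsplit : (1 - u) ^ (a + b) = (1 - u) ^ (a - 1) * (1 - u) ^ (b - 1) * (1 - u) ^ 2 := by
    rw [← rpow_natCast, ← rpow_add hv, ← rpow_add hv]
    ring_nf
  rw [hsplit]
  field_simp

lemma integral_Ioi_rpow_div_one_add {s : ℝ} (hs0 : 0 < s) (hs1 : s < 1) :
    ∫ x in Ioi (0 : ℝ), x ^ (s - 1) / (1 + x) = π / sin (π * s) := by
  rw [← beta_self_one_sub, ← integral_Ioi_rpow_mul_one_add_rpow_eq_beta hs0 (sub_pos.2 hs1)]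
  refine setIntegral_congr_fun measurableSet_Ioi fun x hx => ?_
  rw [add_sub_cancel, rpow_neg (by linarith [mem_Ioi.1 hx]), rpow_one, div_eq_mul_inv]

lemma integral_Ioi_rpow_mul_div_add {t s : ℝ} (ht : 0 < t) (hs0 : 0 < s) (hs1 : s < 1) :
    ∫ x in Ioi (0 : ℝ), x ^ (s - 1) * (t / (t + x)) = t ^ s * (π / sin (π * s)) := by
  have hscale := integral_comp_mul_left_Ioi (fun x => x ^ (s - 1) * (t / (t + x))) 0 ht
  rw [mul_zero, smul_eq_mul, eq_inv_mul_iff_mul_eq₀ ht.ne'] at hscale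
  calc ∫ x in Ioi (0 : ℝ), x ^ (s - 1) * (t / (t + x))
      = t * ∫ x in Ioi (0 : ℝ), (t * x) ^ (s - 1) * (t / (t + t * x)) := hscale.symm
    _ = t * ∫ x in Ioi (0 : ℝ), t ^ (s - 1) * (x ^ (s - 1) / (1 + x)) := by
      congr 1
      refine setIntegral_congr_fun measurableSet_Ioi fun x (hx : 0 < x) => ?_
      rw [mul_rpow ht.le hx.le]
      field_simp
    _ = t ^ s * (π / sin (π * s)) := by
      rw [integral_const_mul, integral_Ioi_rpow_div_one_add hs0 hs1, rpow_sub_one ht.ne']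
      field_simp

/-- Integral representation of the power function: for `t ≥ 0` and `0 < s < 1`,
`t^s = (sin(sπ)/π) ∫₀^∞ λ^(s-1) t/(t+λ) dλ`. -/
theorem rpow_eq_sin_mul_integral
    (t : ℝ) (ht : 0 ≤ t) (s : ℝ) (hs0 : 0 < s) (hs1 : s < 1) :
    t ^ s = (Real.sin (s * Real.pi) / Real.pi)
      * ∫ lam in Set.Ioi (0 : ℝ), lam ^ (s - 1) * (t / (t + lam)) := by
  rcases ht.eq_or_lt with rfl | ht
  · simp [zero_rpow hs0.ne']
  have hsin : sin (π * s) ≠ 0 :=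
    (sin_pos_of_pos_of_lt_pi (by positivity) (by nlinarith [pi_pos])).ne'
  rw [integral_Ioi_rpow_mul_div_add ht hs0 hs1, mul_comm s π]
  field_simp
end
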